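/- For radially distributed control values ūᵢ = ω₀(cos θᵢ, sin θᵢ) (i = 1,…,M) with equidistributed angles and c(v) = ½|v|², the proximal map of γ·g* on the set Q_{0,i}^γ = Q_{0,i} + [0,γ]ūᵢ is given explicitly by prox_{γg*}(q) = q − (⟨q,ūᵢ⟩/ω₀² − α/2)·ūᵢ, and this point satisfies ⟨prox_{γg*}(q), ūᵢ⟩ = (α/2)ω₀². -/
import Mathlib


open Real Set

set_option maxHeartbeats 1000000
noncomputable section

/-- for radially distributed control values `ūᵢ = ω₀(cosθᵢ, sinθᵢ)` with
equidistributed angles and `c(v) = ½|v|²`, on the set `Q_{0,i}^γ = Q_{0,i} + [0,γ]ūᵢ` the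
proximal map of `γ g*` is `prox_{γg*}(q) = q − (⟨q,ūᵢ⟩/ω₀² − α/2)ūᵢ`, and this point satisfies
`⟨prox_{γg*}(q), ūᵢ⟩ = (α/2)ω₀²`. -/
theorem stmt9 (N : ℕ) (hN : 2 < N) (ω₀ α γ : ℝ) (hω : 0 < ω₀) (hα : 0 < α) (hγ : 0 < γ)
    (u : Fin N → ℝ × ℝ)
    (hu : ∀ i, u i = (ω₀ * cos (2 * π * (i : ℕ) / N), ω₀ * sin (2 * π * (i : ℕ) / N)))
    (gstar : ℝ × ℝ → ℝ)
    (hgstar : ∀ q, gstar q = max 0 (Finset.univ.sup'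
      (Finset.univ_nonempty_iff.mpr ⟨⟨0, by omega⟩⟩)
      (fun j => q.1 * (u j).1 + q.2 * (u j).2 - α / 2 * ω₀ ^ 2)))
    (i : Fin N) (q w : ℝ × ℝ) (t : ℝ)
    -- `w ∈ Q_{0,i}`:
    (hw1 : w.1 * (u i).1 + w.2 * (u i).2 = α / 2 * ω₀ ^ 2)
    (hw2 : ∀ j, w.1 * (u j).1 + w.2 * (u j).2 ≤ w.1 * (u i).1 + w.2 * (u i).2)
    (hw3 : ∀ j, j ≠ i → w.1 * (u j).1 + w.2 * (u j).2 < α / 2 * ω₀ ^ 2)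
    (ht : t ∈ Icc (0 : ℝ) γ) (hq : q = w + t • u i)
    (p : ℝ × ℝ)
    (hp : p = q - ((q.1 * (u i).1 + q.2 * (u i).2) / ω₀ ^ 2 - α / 2) • u i) :
    (∀ w' : ℝ × ℝ,
      1 / (2 * γ) * ((p.1 - q.1) ^ 2 + (p.2 - q.2) ^ 2) + gstar p
        ≤ 1 / (2 * γ) * ((w'.1 - q.1) ^ 2 + (w'.2 - q.2) ^ 2) + gstar w') ∧
    p.1 * (u i).1 + p.2 * (u i).2 = α / 2 * ω₀ ^ 2 := by
  have hnorm : (u i).1 ^ 2 + (u i).2 ^ 2 = ω₀ ^ 2 := by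
    rw [hu i]
    have := sin_sq_add_cos_sq (2 * π * (i : ℕ) / N)
    simp only []
    nlinarith [this]
  have hq1 : q.1 = w.1 + t * (u i).1 := by rw [hq]; rfl
  have hq2 : q.2 = w.2 + t * (u i).2 := by rw [hq]; rfl
  have hqu : q.1 * (u i).1 + q.2 * (u i).2 = α / 2 * ω₀ ^ 2 + t * ω₀ ^ 2 := by
    rw [hq1, hq2]; linear_combination hw1 + t * hnorm
  have hct : (q.1 * (u i).1 + q.2 * (u i).2) / ω₀ ^ 2 - α / 2 = t := by
    rw [hqu]; field_simp; ring
  have hp1 : p.1 = w.1 := by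
    have h : p.1 = q.1 - t * (u i).1 := by rw [hp, hct]; rfl
    rw [h, hq1]; ring
  have hp2 : p.2 = w.2 := by
    have h : p.2 = q.2 - t * (u i).2 := by rw [hp, hct]; rfl
    rw [h, hq2]; ring
  have hgp : gstar p = 0 := by
    rw [hgstar]
    have hsup : (Finset.univ.sup'
        (Finset.univ_nonempty_iff.mpr ⟨⟨0, by omega⟩⟩)
        (fun j => p.1 * (u j).1 + p.2 * (u j).2 - α / 2 * ω₀ ^ 2)) ≤ 0 := by
      apply Finset.sup'_le
      intro j _
      have h2 := hw2 j
      rw [hw1] at h2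
      rw [hp1, hp2]
      linarith
    exact max_eq_left hsup
  constructor
  · intro w'
    have hg0 : 0 ≤ gstar w' := by rw [hgstar]; exact le_max_left _ _
    have hgb : w'.1 * (u i).1 + w'.2 * (u i).2 - α / 2 * ω₀ ^ 2 ≤ gstar w' := by
      rw [hgstar]
      refine le_trans ?_ (le_max_right _ _)
      exact Finset.le_sup' (f := fun j => w'.1 * (u j).1 + w'.2 * (u j).2 - α / 2 * ω₀ ^ 2) (Finset.mem_univ i)
    have cs : ((w'.1 - q.1) * (u i).1 + (w'.2 - q.2) * (u i).2) ^ 2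
        ≤ ((w'.1 - q.1) ^ 2 + (w'.2 - q.2) ^ 2) * ω₀ ^ 2 := by
      nlinarith [sq_nonneg ((w'.1 - q.1) * (u i).2 - (w'.2 - q.2) * (u i).1)]
    have hL : (p.1 - q.1) ^ 2 + (p.2 - q.2) ^ 2 = t ^ 2 * ω₀ ^ 2 := by
      rw [hp1, hp2, hq1, hq2]; nlinarith [hnorm]
    rw [hgp, hL]
    have hb : (w'.1 - q.1) * (u i).1 + (w'.2 - q.2) * (u i).2
        = (w'.1 * (u i).1 + w'.2 * (u i).2 - α / 2 * ω₀ ^ 2) - t * ω₀ ^ 2 := by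
      rw [hq1, hq2]; linear_combination -hw1 - t * hnorm
    set m := gstar w' with hm
    set b := w'.1 * (u i).1 + w'.2 * (u i).2 - α / 2 * ω₀ ^ 2 with hbdef
    set D := (w'.1 - q.1) ^ 2 + (w'.2 - q.2) ^ 2 with hD
    rw [hb] at cs
    -- need : 1/(2γ) * (t²ω₀²) + 0 ≤ 1/(2γ) D + m
    have key : t ^ 2 * ω₀ ^ 2 * ω₀ ^ 2 ≤ D * ω₀ ^ 2 + 2 * γ * ω₀ ^ 2 * m := by
      nlinarith [cs, hg0, hgb, ht.1, ht.2, sq_nonneg b, sq_nonneg ω₀,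
        mul_nonneg (mul_nonneg ht.1 (sq_nonneg ω₀)) (sub_nonneg.mpr hgb),
        mul_nonneg (mul_nonneg (sub_nonneg.mpr ht.2) (sq_nonneg ω₀)) hg0]
    have hω2 : (0:ℝ) < ω₀ ^ 2 := by positivity
    have h2γ : (0:ℝ) < 2 * γ := by linarith
    rw [div_mul_eq_mul_div, div_mul_eq_mul_div, one_mul, one_mul, add_zero,
      div_add' _ _ _ (ne_of_gt h2γ), div_le_div_iff₀ h2γ h2γ]
    nlinarith [key, hω2]
  · rw [hp1, hp2]; exact hw1
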